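/- Let G be a connected simple graph on a finite vertex type V whose number of edges equals its number of vertices, and let C be a cycle in G of length exactly 4 passing consecutively through vertices v1, v2, v3. Let G' be the clasp of G at (v1, v3). Then G' is a tree: G' is connected and contains no cycle, and the number of edges of G' equals |V| - 1. -/

import Mathlib

/-!
The clasp keeps `G` connected, since each edge `v₃z` of `G` is replaced by the path `v₃v₁z`.
It removes the `deg v₃` edges at `v₃` and adds `v₁v₃` together with `v₁z` for the neighbours `z`
of `v₃` not already adjacent to `v₁`, so it has at most `|E(G)| + 1 - c` edges, where `c` is the
number of common neighbours of `v₁` and `v₃`. The 4-cycle `v₁v₂v₃w` gives `c ≥ 2`, hence at most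
`|V| - 1` edges; a connected graph with that few edges is a tree.
-/

/-- The clasp of a simple graph `G` at a pair of vertices `(v₁, v₃)`: `x` and `y` are
adjacent in the clasp iff `{x, y} = {v₁, v₃}`, or `v₃ ∉ {x, y}` and (`x` and `y` are
adjacent in `G`, or `x = v₁` and `y` is adjacent to `v₃` in `G`, or `y = v₁` and `x`
is adjacent to `v₃` in `G`).  (As a simple graph it is in addition loopless.) -/
def SimpleGraph.clasp {V : Type*} (G : SimpleGraph V) (v₁ v₃ : V) : SimpleGraph V :=
  SimpleGraph.fromRel (fun x y =>
    s(x, y) = s(v₁, v₃) ∨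
      (x ≠ v₃ ∧ y ≠ v₃ ∧
        (G.Adj x y ∨ (x = v₁ ∧ G.Adj v₃ y) ∨ (y = v₁ ∧ G.Adj v₃ x))))

namespace SimpleGraph

variable {V : Type*} {G H : SimpleGraph V} {v₁ v₃ : V}

lemma Connected.of_adj_imp_reachable (hG : G.Connected)
    (h : ∀ ⦃x y⦄, G.Adj x y → H.Reachable x y) : H.Connected := by
  refine (connected_iff H).2 ⟨fun x y => ?_, hG.nonempty⟩
  simp only [reachable_iff_reflTransGen] at h ⊢
  exact Relation.ReflTransGen.lift' id h _ _ ((reachable_iff_reflTransGen x y).1 (hG x y))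

lemma Walk.IsCycle.edges_eq_of_length_eq_four {x : V} {c : G.Walk x x} (hc : c.IsCycle)
    (h4 : c.length = 4) :
    ∃ a b d, c.edges = [s(x, a), s(a, b), s(b, d), s(d, x)] ∧ [a, b, d, x].Nodup := by
  match c, hc, h4 with
  | .cons _ (.cons _ (.cons _ (.cons _ .nil))), hc, _ =>
    exact ⟨_, _, _, rfl, by simpa using hc.support_nodup⟩

lemma Walk.IsCycle.exists_adj_adj_of_length_eq_four {u : V} {c : G.Walk u u} (hc : c.IsCycle)
    (h4 : c.length = 4) {v₁ v₂ v₃ : V} (h₁₃ : v₁ ≠ v₃) (he₁ : s(v₁, v₂) ∈ c.edges)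
    (he₂ : s(v₂, v₃) ∈ c.edges) : ∃ w, w ≠ v₂ ∧ G.Adj v₁ w ∧ G.Adj v₃ w := by
  classical
  have hv₂ : v₂ ∈ c.support := c.snd_mem_support_of_mem_edges he₁
  obtain ⟨a, b, d, hedges, hnd⟩ :=
    (hc.rotate hv₂).edges_eq_of_length_eq_four (by rwa [Walk.length_rotate])
  simp only [List.nodup_cons, List.mem_cons, List.not_mem_nil, or_false, not_or,
    List.nodup_nil] at hnd
  obtain ⟨⟨-, -, ha₂⟩, ⟨-, hb₂⟩, hd₂, -⟩ := hnd
  have hcycle_nbr : ∀ v, s(v, v₂) ∈ c.edges → v = a ∨ v = d := by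
    intro v hv
    rw [← (c.rotate_edges v₂ hv₂).mem_iff, hedges] at hv
    simp only [List.mem_cons, List.not_mem_nil, or_false, Sym2.eq_iff] at hv
    grind
  have hab : G.Adj a b := (c.rotate v₂ hv₂).edges_subset_edgeSet (e := s(a, b)) (by simp [hedges])
  have hbd : G.Adj b d := (c.rotate v₂ hv₂).edges_subset_edgeSet (e := s(b, d)) (by simp [hedges])
  refine ⟨b, hb₂, ?_⟩
  rcases hcycle_nbr v₁ he₁ with rfl | rfl <;>
    rcases hcycle_nbr v₃ (Sym2.eq_swap ▸ he₂) with rfl | rfl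
  all_goals first | exact absurd rfl h₁₃ | exact ⟨hab, hbd.symm⟩ | exact ⟨hbd.symm, hab⟩

lemma clasp_adj_of_ne (h₁₃ : v₁ ≠ v₃) : (G.clasp v₁ v₃).Adj v₁ v₃ := by
  simp [clasp, h₁₃]

lemma clasp_adj_of_adj {x y : V} (hx : x ≠ v₃) (hy : y ≠ v₃) (h : G.Adj x y) :
    (G.clasp v₁ v₃).Adj x y := by
  simp [clasp, h.ne, hx, hy, h]

lemma clasp_adj_left_of_adj_right (h₁₃ : v₁ ≠ v₃) {y : V} (hy : y ≠ v₁) (h : G.Adj v₃ y) :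
    (G.clasp v₁ v₃).Adj v₁ y := by
  simp [clasp, Ne.symm hy, h.ne', h, h₁₃]

lemma clasp_reachable_of_adj (h₁₃ : v₁ ≠ v₃) {x y : V} (h : G.Adj x y) :
    (G.clasp v₁ v₃).Reachable x y := by
  have hv₃ : ∀ z, G.Adj v₃ z → (G.clasp v₁ v₃).Reachable v₃ z := by
    intro z hz
    refine (clasp_adj_of_ne h₁₃).symm.reachable.trans ?_
    obtain rfl | hz₁ := eq_or_ne z v₁
    · rfl
    · exact (clasp_adj_left_of_adj_right h₁₃ hz₁ hz).reachable
  obtain rfl | hx := eq_or_ne x v₃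
  · exact hv₃ y h
  obtain rfl | hy := eq_or_ne y v₃
  · exact (hv₃ x h.symm).symm
  exact (clasp_adj_of_adj hx hy h).reachable

lemma clasp_edgeSet_subset (h₁₃ : v₁ ≠ v₃) :
    (G.clasp v₁ v₃).edgeSet ⊆ (G.edgeSet \ G.incidenceSet v₃) ∪
      (fun z => s(v₁, z)) '' insert v₃ (G.neighborSet v₃ \ G.neighborSet v₁) := by
  have hold : ∀ {a b}, G.Adj a b → a ≠ v₃ → b ≠ v₃ → s(a, b) ∈ G.edgeSet \ G.incidenceSet v₃ :=
    fun hab ha hb => ⟨hab, fun ⟨_, hv⟩ => by rcases Sym2.mem_iff.1 hv with rfl | rfl <;> simp_all⟩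
  have hnew : ∀ {z}, G.Adj v₃ z → s(v₁, z) ∈ (G.edgeSet \ G.incidenceSet v₃) ∪
      (fun z => s(v₁, z)) '' insert v₃ (G.neighborSet v₃ \ G.neighborSet v₁) := by
    intro z hz
    by_cases h₁z : G.Adj v₁ z
    · exact Or.inl (hold h₁z h₁₃ hz.ne')
    · exact Or.inr ⟨z, Set.mem_insert_of_mem _ ⟨hz, h₁z⟩, rfl⟩
  intro e he
  induction e using Sym2.ind with | _ x y => ?_
  obtain ⟨-, h | h⟩ := he
  all_goals
    rcases h with h | ⟨hx, hy, h | ⟨rfl, h⟩ | ⟨rfl, h⟩⟩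
  · exact Or.inr ⟨v₃, Set.mem_insert _ _, h.symm⟩
  · exact Or.inl (hold h hx hy)
  · exact hnew h
  · rw [Sym2.eq_swap]; exact hnew h
  · exact Or.inr ⟨v₃, Set.mem_insert _ _, h.symm.trans Sym2.eq_swap⟩
  · exact Or.inl (hold h.symm hy hx)
  · rw [Sym2.eq_swap]; exact hnew h
  · exact hnew h

lemma ncard_incidenceSet (v : V) : (G.incidenceSet v).ncard = (G.neighborSet v).ncard := by
  classical
  rw [← Nat.card_coe_set_eq, ← Nat.card_coe_set_eq,
    Nat.card_congr (G.incidenceSetEquivNeighborSet v)]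

lemma ncard_edgeSet_clasp_add_ncard_inter_le [Finite V] (h₁₃ : v₁ ≠ v₃) :
    (G.clasp v₁ v₃).edgeSet.ncard + (G.neighborSet v₁ ∩ G.neighborSet v₃).ncard ≤
      G.edgeSet.ncard + 1 := by
  have hsplit := Set.ncard_inter_add_ncard_sdiff_eq_ncard (G.neighborSet v₃) (G.neighborSet v₁)
  have hinc : (G.neighborSet v₃).ncard ≤ G.edgeSet.ncard :=
    ncard_incidenceSet v₃ ▸ Set.ncard_le_ncard (G.incidenceSet_subset v₃)
  have hold :
      (G.edgeSet \ G.incidenceSet v₃).ncard = G.edgeSet.ncard - (G.neighborSet v₃).ncard := by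
    rw [Set.ncard_sdiff (G.incidenceSet_subset v₃), ncard_incidenceSet]
  have hnew : ((fun z => s(v₁, z)) '' insert v₃ (G.neighborSet v₃ \ G.neighborSet v₁)).ncard ≤
      (G.neighborSet v₃ \ G.neighborSet v₁).ncard + 1 :=
    (Set.ncard_image_le (Set.toFinite _)).trans (Set.ncard_insert_le _ _)
  have := (Set.ncard_le_ncard (clasp_edgeSet_subset (G := G) h₁₃)).trans (Set.ncard_union_le _ _)
  rw [Set.inter_comm]
  omega

lemma Connected.clasp (hG : G.Connected) (h₁₃ : v₁ ≠ v₃) : (G.clasp v₁ v₃).Connected :=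
  hG.of_adj_imp_reachable fun _ _ h => clasp_reachable_of_adj h₁₃ h

end SimpleGraph

open SimpleGraph

theorem stmt_7_general {V : Type*} [Fintype V]
    (G : SimpleGraph V) [DecidableRel G.Adj]
    (hconn : G.Connected)
    (hcard : G.edgeFinset.card = Fintype.card V)
    (u : V) (C : G.Walk u u) (hC : C.IsCycle)
    (hk : C.length = 4)
    (v₁ v₂ v₃ : V) (h₁₃ : v₁ ≠ v₃)
    (he₁ : s(v₁, v₂) ∈ C.edges) (he₂ : s(v₂, v₃) ∈ C.edges) :
    (G.clasp v₁ v₃).Connected ∧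
      (G.clasp v₁ v₃).IsAcyclic ∧
      (G.clasp v₁ v₃).edgeSet.ncard = Fintype.card V - 1 := by
  obtain ⟨w, hw₂, hw₁, hw₃⟩ := hC.exists_adj_adj_of_length_eq_four hk h₁₃ he₁ he₂
  have hcommon : 2 ≤ (G.neighborSet v₁ ∩ G.neighborSet v₃).ncard := by
    rw [← Set.ncard_pair hw₂]
    refine Set.ncard_le_ncard ?_
    rintro z (rfl | rfl)
    · exact ⟨hw₁, hw₃⟩
    · exact ⟨C.adj_of_mem_edges he₁, (C.adj_of_mem_edges he₂).symm⟩
  have hupper := ncard_edgeSet_clasp_add_ncard_inter_le (G := G) h₁₃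
  have hGcard : G.edgeSet.ncard = Fintype.card V := by
    rw [← hcard, ← Set.ncard_coe_finset, coe_edgeFinset]
  have hK := hconn.clasp h₁₃
  have hlower := hK.card_vert_le_card_edgeSet_add_one
  rw [Nat.card_eq_fintype_card, Nat.card_coe_set_eq] at hlower
  have htree : (G.clasp v₁ v₃).IsTree := by
    refine isTree_iff_connected_and_card.2 ⟨hK, ?_⟩
    rw [Nat.card_coe_set_eq, Nat.card_eq_fintype_card]
    omega
  exact ⟨hK, htree.isAcyclic, by omega⟩

/-- Let `G` be a connected simple graph on a finite vertex type whose
number of edges equals its number of vertices, and let `C` be a cycle in `G` of length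
exactly `4` passing consecutively through vertices `v₁, v₂, v₃`. Let `G'` be the clasp
of `G` at `(v₁, v₃)`. Then `G'` is a tree: it is connected and acyclic, and its number
of edges equals `|V| - 1`. -/
theorem stmt_7 {V : Type*} [Fintype V] [DecidableEq V]
    (G : SimpleGraph V) [DecidableRel G.Adj]
    (hconn : G.Connected)
    (hcard : G.edgeFinset.card = Fintype.card V)
    (u : V) (C : G.Walk u u) (hC : C.IsCycle)
    (hk : C.length = 4)
    (v₁ v₂ v₃ : V) (h₁₂ : v₁ ≠ v₂) (h₂₃ : v₂ ≠ v₃) (h₁₃ : v₁ ≠ v₃)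
    (he₁ : s(v₁, v₂) ∈ C.edges) (he₂ : s(v₂, v₃) ∈ C.edges) :
    (G.clasp v₁ v₃).Connected ∧
      (G.clasp v₁ v₃).IsAcyclic ∧
      (G.clasp v₁ v₃).edgeSet.ncard = Fintype.card V - 1 :=
  stmt_7_general G hconn hcard u C hC hk v₁ v₂ v₃ h₁₃ he₁ he₂
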